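/- Let X be a binomial random variable with parameters n and 1/2, and let α, β be nonnegative integers with max(α, β) ≥ 1. Then |E[X^α (n−X)^β] − (n/2)^(α+β)| ≤ max(α, β) · n^(α+β−1/2) for all n ≥ 1. -/

import Mathlib

/-! With m = n/2 the mean of X, the bound |k^α (n-k)^β - m^α m^β| ≤ (α+β) n^(α+β-1) |k - m| on [0, n]
reduces the error to (α+β) n^(α+β-1) E|X - m|, and Cauchy–Schwarz gives E|X - m| ≤ √(Var X) = √n / 2.
Finally α + β ≤ 2 max(α, β). -/

open Finset

lemma Finset.sum_range_succ_choose_mul {R : Type*} [NonAssocSemiring R] (n : ℕ) (f : ℕ → R) :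
    ∑ k ∈ range (n + 2), ((n + 1).choose k : R) * f k
      = ∑ k ∈ range (n + 1), (n.choose k : R) * (f k + f (k + 1)) := by
  have shift : ∑ k ∈ range (n + 1), (n.choose (k + 1) : R) * f (k + 1) + f 0
      = ∑ k ∈ range (n + 1), (n.choose k : R) * f k := by
    rw [sum_range_succ, Nat.choose_succ_self, sum_range_succ' _ n]
    simp
  rw [sum_range_succ']
  simp only [Nat.choose_succ_succ', Nat.cast_add, add_mul, mul_add, sum_add_distrib,
    Nat.choose_zero_right, Nat.cast_one, one_mul]
  rw [← shift]
  abel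

lemma Finset.sum_range_choose_mul_two_mul_sub_sq {R : Type*} [CommRing R] (n : ℕ) :
    ∑ k ∈ range (n + 1), (n.choose k : R) * (2 * k - n) ^ 2 = (n : R) * 2 ^ n := by
  induction n with
  | zero => simp
  | succ n ih =>
    have sum_choose : ∑ k ∈ range (n + 1), (n.choose k : R) = 2 ^ n := by
      rw [← Nat.cast_sum, Nat.sum_range_choose, Nat.cast_pow, Nat.cast_ofNat]
    rw [sum_range_succ_choose_mul]
    calc ∑ k ∈ range (n + 1), (n.choose k : R)
          * ((2 * k - ((n + 1 : ℕ) : R)) ^ 2 + (2 * ((k + 1 : ℕ) : R) - ((n + 1 : ℕ) : R)) ^ 2)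
        = ∑ k ∈ range (n + 1), (2 * ((n.choose k : R) * (2 * k - n) ^ 2)
            + 2 * (n.choose k : R)) := by
          refine sum_congr rfl fun k _ => ?_
          push_cast
          ring
      _ = ((n + 1 : ℕ) : R) * 2 ^ (n + 1) := by
          rw [sum_add_distrib, ← mul_sum, ← mul_sum, ih, sum_choose]
          push_cast
          ring

lemma abs_pow_sub_pow_le_of_abs_le {R : Type*} [CommRing R] [LinearOrder R] [IsStrictOrderedRing R]
    (a : ℕ) {x y N : R} (hx : |x| ≤ N) (hy : |y| ≤ N) :
    |x ^ a - y ^ a| ≤ a * N ^ (a - 1) * |x - y| := by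
  calc |x ^ a - y ^ a| ≤ |x - y| * a * max |x| |y| ^ (a - 1) := abs_pow_sub_pow_le ..
    _ ≤ |x - y| * a * N ^ (a - 1) := by gcongr; exact max_le hx hy
    _ = a * N ^ (a - 1) * |x - y| := by ring

lemma natCast_mul_pow_pred_mul_pow {R : Type*} [CommSemiring R] (a b : ℕ) (N : R) :
    (a : R) * N ^ (a - 1) * N ^ b = a * N ^ (a + b - 1) := by
  cases a with
  | zero => simp
  | succ a => rw [mul_assoc, ← pow_add, Nat.add_sub_cancel, Nat.add_right_comm, Nat.add_sub_cancel]

lemma abs_pow_mul_pow_sub_pow_mul_pow_le {R : Type*} [CommRing R] [LinearOrder R]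
    [IsStrictOrderedRing R] (a b : ℕ) {x y u v N : R} (hx : |x| ≤ N) (hy : |y| ≤ N)
    (hu : |u| ≤ N) (hv : |v| ≤ N) :
    |x ^ a * y ^ b - u ^ a * v ^ b| ≤ N ^ (a + b - 1) * (a * |x - u| + b * |y - v|) := by
  calc |x ^ a * y ^ b - u ^ a * v ^ b|
        = |(x ^ a - u ^ a) * y ^ b + u ^ a * (y ^ b - v ^ b)| := by ring_nf
    _ ≤ |x ^ a - u ^ a| * |y| ^ b + |u| ^ a * |y ^ b - v ^ b| := by
        grw [abs_add_le, abs_mul, abs_mul, abs_pow, abs_pow]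
    _ ≤ (a * N ^ (a - 1) * |x - u|) * N ^ b + N ^ a * (b * N ^ (b - 1) * |y - v|) := by
        have hN : 0 ≤ N := (abs_nonneg x).trans hx
        gcongr
        · exact abs_pow_sub_pow_le_of_abs_le a hx hu
        · exact abs_pow_sub_pow_le_of_abs_le b hy hv
    _ = N ^ (a + b - 1) * (a * |x - u| + b * |y - v|) := by
        have hα := natCast_mul_pow_pred_mul_pow a b N
        have hβ := natCast_mul_pow_pred_mul_pow b a N
        rw [add_comm b a] at hβ
        linear_combination |x - u| * hα + |y - v| * hβ

lemma abs_sum_mul_sub_le_sum_mul_abs_sub {ι : Type*} {s : Finset ι} {w : ι → ℝ}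
    (hw : ∀ i ∈ s, 0 ≤ w i) (hw1 : ∑ i ∈ s, w i = 1) (f : ι → ℝ) (c : ℝ) :
    |∑ i ∈ s, w i * f i - c| ≤ ∑ i ∈ s, w i * |f i - c| := by
  calc |∑ i ∈ s, w i * f i - c| = |∑ i ∈ s, w i * (f i - c)| := by
        simp only [mul_sub, sum_sub_distrib, ← sum_mul, hw1, one_mul]
    _ ≤ ∑ i ∈ s, |w i * (f i - c)| := abs_sum_le_sum_abs _ _
    _ = ∑ i ∈ s, w i * |f i - c| := sum_congr rfl fun i hi => by
        rw [abs_mul, abs_of_nonneg (hw i hi)]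

lemma sq_sum_mul_le_sum_mul_sq {ι : Type*} {s : Finset ι} {w : ι → ℝ}
    (hw : ∀ i ∈ s, 0 ≤ w i) (hw1 : ∑ i ∈ s, w i = 1) (f : ι → ℝ) :
    (∑ i ∈ s, w i * f i) ^ 2 ≤ ∑ i ∈ s, w i * f i ^ 2 := by
  simpa only [hw1, one_mul] using sum_sq_le_sum_mul_sum_of_sq_le_mul s hw
    (fun i hi => mul_nonneg (hw i hi) (sq_nonneg (f i))) (fun i _ => le_of_eq (by ring))

noncomputable def binomialHalfWeight (n k : ℕ) : ℝ := n.choose k * (1 / 2) ^ n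

lemma binomialHalfWeight_nonneg (n k : ℕ) : 0 ≤ binomialHalfWeight n k := by
  unfold binomialHalfWeight; positivity

lemma sum_binomialHalfWeight (n : ℕ) : ∑ k ∈ range (n + 1), binomialHalfWeight n k = 1 := by
  simp only [binomialHalfWeight, ← sum_mul]
  rw [← Nat.cast_sum, Nat.sum_range_choose]
  push_cast
  rw [← mul_pow]
  norm_num

lemma sum_binomialHalfWeight_mul_sub_sq (n : ℕ) :
    ∑ k ∈ range (n + 1), binomialHalfWeight n k * ((k : ℝ) - n / 2) ^ 2 = (n : ℝ) / 4 := by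
  calc ∑ k ∈ range (n + 1), binomialHalfWeight n k * ((k : ℝ) - n / 2) ^ 2
      = (1 / 2) ^ n / 4 * ∑ k ∈ range (n + 1), (n.choose k : ℝ) * (2 * k - n) ^ 2 := by
        rw [mul_sum]
        exact sum_congr rfl fun k _ => by unfold binomialHalfWeight; ring
    _ = (1 / 2 * 2 : ℝ) ^ n * n / 4 := by
        rw [sum_range_choose_mul_two_mul_sub_sq, mul_pow]
        ring
    _ = (n : ℝ) / 4 := by norm_num

lemma sum_binomialHalfWeight_mul_abs_sub_le (n : ℕ) :
    ∑ k ∈ range (n + 1), binomialHalfWeight n k * |(k : ℝ) - n / 2| ≤ √n / 2 := by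
  have h := sq_sum_mul_le_sum_mul_sq (fun k _ => binomialHalfWeight_nonneg n k)
    (sum_binomialHalfWeight n) fun k => |(k : ℝ) - n / 2|
  simp only [sq_abs, sum_binomialHalfWeight_mul_sub_sq] at h
  rw [le_div_iff₀ two_pos, mul_comm]
  exact Real.le_sqrt_of_sq_le (by nlinarith)

lemma natCast_mul_pow_pred_mul_sqrt (d : ℕ) {x : ℝ} (hx : 0 ≤ x) :
    (d : ℝ) * x ^ (d - 1) * √x = d * x ^ ((d : ℝ) - 1 / 2) := by
  cases d with
  | zero => simp
  | succ d =>
    rw [mul_assoc, Nat.add_sub_cancel, Real.sqrt_eq_rpow, ← Real.rpow_natCast,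
      ← Real.rpow_add' hx (by positivity)]
    push_cast
    ring_nf

lemma abs_pow_mul_pow_sub_half_pow_le {n k : ℕ} (hk : k ≤ n) (α β : ℕ) :
    |(k : ℝ) ^ α * ((n : ℝ) - k) ^ β - ((n : ℝ) / 2) ^ (α + β)|
      ≤ (α + β : ℕ) * (n : ℝ) ^ (α + β - 1) * |(k : ℝ) - n / 2| := by
  have hkn : (k : ℝ) ≤ n := by exact_mod_cast hk
  have bound {x : ℝ} (h0 : 0 ≤ x) (hn : x ≤ n) : |x| ≤ n := by rwa [abs_of_nonneg h0]
  have hk := bound k.cast_nonneg hkn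
  have hnk := bound (sub_nonneg.2 hkn) (sub_le_self _ k.cast_nonneg)
  have hm := bound (by positivity) (half_le_self n.cast_nonneg)
  calc |(k : ℝ) ^ α * ((n : ℝ) - k) ^ β - ((n : ℝ) / 2) ^ (α + β)|
      ≤ (n : ℝ) ^ (α + β - 1) * (α * |(k : ℝ) - n / 2| + β * |(n : ℝ) - k - n / 2|) := by
        rw [pow_add]
        exact abs_pow_mul_pow_sub_pow_mul_pow_le α β hk hnk hm hm
    _ = (α + β : ℕ) * (n : ℝ) ^ (α + β - 1) * |(k : ℝ) - n / 2| := by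
        rw [show (n : ℝ) - k - n / 2 = -((k : ℝ) - n / 2) by ring, abs_neg]
        push_cast
        ring

theorem binomial_half_mixed_moment_bound (n α β : ℕ) :
    |(∑ k ∈ Finset.range (n + 1),
        (n.choose k : ℝ) * (1 / 2) ^ n * (k : ℝ) ^ α * ((n : ℝ) - k) ^ β)
      - ((n : ℝ) / 2) ^ (α + β)|
    ≤ (max α β : ℝ) * (n : ℝ) ^ ((α : ℝ) + (β : ℝ) - 1 / 2) := by
  set d := α + β
  have hw := fun k (_ : k ∈ range (n + 1)) => binomialHalfWeight_nonneg n k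
  calc _ = |∑ k ∈ range (n + 1), binomialHalfWeight n k * ((k : ℝ) ^ α * ((n : ℝ) - k) ^ β)
          - ((n : ℝ) / 2) ^ d| := by
        simp only [binomialHalfWeight, mul_assoc]
    _ ≤ ∑ k ∈ range (n + 1), binomialHalfWeight n k
          * |(k : ℝ) ^ α * ((n : ℝ) - k) ^ β - ((n : ℝ) / 2) ^ d| :=
        abs_sum_mul_sub_le_sum_mul_abs_sub hw (sum_binomialHalfWeight n) _ _
    _ ≤ ∑ k ∈ range (n + 1), binomialHalfWeight n k
          * ((d : ℕ) * (n : ℝ) ^ (d - 1) * |(k : ℝ) - n / 2|) := by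
        gcongr with k hk
        · exact hw k hk
        · exact abs_pow_mul_pow_sub_half_pow_le (Nat.lt_succ_iff.mp (mem_range.mp hk)) α β
    _ = (d : ℕ) * (n : ℝ) ^ (d - 1)
          * ∑ k ∈ range (n + 1), binomialHalfWeight n k * |(k : ℝ) - n / 2| := by
        rw [mul_sum]
        exact sum_congr rfl fun k _ => by ring
    _ ≤ (d : ℕ) * (n : ℝ) ^ (d - 1) * (√n / 2) := by
        gcongr
        exact sum_binomialHalfWeight_mul_abs_sub_le n
    _ = (d : ℕ) / 2 * (n : ℝ) ^ ((d : ℝ) - 1 / 2) := by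
        rw [div_mul_eq_mul_div, ← natCast_mul_pow_pred_mul_sqrt d n.cast_nonneg]
        ring
    _ ≤ (max α β : ℝ) * (n : ℝ) ^ ((α : ℝ) + (β : ℝ) - 1 / 2) := by
        have : (d : ℝ) ≤ 2 * (max α β : ℕ) := by exact_mod_cast (by omega : d ≤ 2 * max α β)
        push_cast [d] at this ⊢
        gcongr
        linarith
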